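/- Let V be a nonempty finite set and let P be a set of unordered pairs of distinct half-edges (a half-edge is a pair (v,i) with v ∈ V and i ∈ {1,2,3}) such that each half-edge belongs to at most one pair of P, and such that the graph on vertex set V with one edge {v,w} for each pair {(v,i),(w,j)} ∈ P is a tree (connected with |P| = |V| − 1; in particular v ≠ w in each pair). Let M be the additive monoid of all functions f : V → ℤ¹⁰, f(v) = (x_v, L_v), such that: (i) f(v) ∈ C ∩ ℤ¹⁰ for every v; (ii) all level coordinates L_v are equal to a common value L(f); (iii) for every pair {(v,i),(w,j)} ∈ P, ∂ᵢ(x_v) = σ(∂ⱼ(x_w)), where σ(p,q) = (q,p). Then every f ∈ M is a sum of L(f) elements of M each having common level 1. -/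

import Mathlib

/-!
Every lattice point of `C` is a nonnegative integer combination of the nine generators: the
generators satisfy the single relation `g_X + g_S + g_T = g₁₂ + g₂₃ + g₃₁`, and shifting real
coefficients along it makes them integral. At each half-edge `i` every generator has boundary
`∂ᵢ` in `{(0,0), (1,0), (0,1)}`, so for a point of level `L` the number of generators of each
boundary type is read off from `(∂ᵢ x, L)`. Hence along a pair of `P` the matching condition lets
every generator used at one end be answered by a generator of the swapped type used at the
other end. Since the pairs form a tree, these answers propagate from one vertex to all of `V`
without conflict and give a level-one element `g` of `M` with `f - g ∈ M` of level one less;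
induction on the level finishes the proof.
-/

/-- The nine generators `g_X, g_S, g_T, g₁₂, g₂₃, g₃₁, g₂₁, g₃₂, g₁₃` of the
trinode cone in `ℤ¹⁰ = ℤ⁹ × ℤ` (first nine coordinates ordered
`(a₁,b₁,c₁,a₂,a₃,b₂,b₃,c₂,c₃)`, last coordinate the level). -/
def cbGens : Fin 9 → Fin 10 → ℤ :=
  ![![0, 0, 0, 0, 0, 0, 0, 0, 0, 1],  -- g_X
    ![0, 0, 0, 1, 0, 1, 0, 1, 0, 1],  -- g_S
    ![0, 0, 0, 0, 1, 0, 1, 0, 1, 1],  -- g_T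
    ![0, 0, 0, 1, 0, 0, 1, 0, 0, 1],  -- g₁₂
    ![0, 0, 0, 0, 0, 1, 0, 0, 1, 1],  -- g₂₃
    ![0, 0, 0, 0, 1, 0, 0, 1, 0, 1],  -- g₃₁
    ![0, 1, 0, 0, 0, 0, 0, 0, 0, 1],  -- g₂₁
    ![0, 0, 1, 0, 0, 0, 0, 0, 0, 1],  -- g₃₂
    ![1, 0, 0, 0, 0, 0, 0, 0, 0, 1]]  -- g₁₃

/-- The real versions of the nine generators. -/
noncomputable def cbGensR (i : Fin 9) : Fin 10 → ℝ := fun t => (cbGens i t : ℝ)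

/-- The polyhedral cone `C ⊆ ℝ¹⁰` generated by the nine vectors. -/
def coneC : Set (Fin 10 → ℝ) :=
  {y | ∃ c : Fin 9 → ℝ, (∀ i, 0 ≤ c i) ∧ y = ∑ i : Fin 9, c i • cbGensR i}

/-- The boundary map applied to the `ℤ⁹`-part of a point of `ℤ¹⁰`:
`∂(x) = ((a₁+a₂, a₃+b₁), (b₁+b₂, b₃+c₁), (c₁+c₂, c₃+a₁))`. -/
def bd10 (y : Fin 10 → ℤ) : Fin 3 → ℤ × ℤ :=
  ![(y 0 + y 3, y 4 + y 1), (y 1 + y 5, y 6 + y 2), (y 2 + y 7, y 8 + y 0)]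

/-- The swap `σ(p, q) = (q, p)`. -/
def sw (p : ℤ × ℤ) : ℤ × ℤ := (p.2, p.1)

open Finset

lemma sum_nsmul_sub_of_ne_zero {ι M : Type*} [Fintype ι] [DecidableEq ι] [AddCommGroup M]
    (g : ι → M) {n : ι → ℕ} {r : ι} (hr : n r ≠ 0) :
    ∑ r', n r' • g r' - g r = ∑ r', (n - Pi.single r 1 : ι → ℕ) r' • g r' := by
  have hn : n = (n - Pi.single r 1) + Pi.single r 1 := by
    ext r'
    by_cases h : r' = r
    · subst h; simp; omega
    · simp [h]
  conv_lhs => rw [hn]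
  simp [add_smul, sum_add_distrib, Pi.single_apply]

def simplexVertices : Finset (ℤ × ℤ) := {(0, 0), (1, 0), (0, 1)}

lemma swap_mem_simplexVertices {τ : ℤ × ℤ} (hτ : τ ∈ simplexVertices) :
    τ.swap ∈ simplexVertices := by
  simp only [simplexVertices, mem_insert, mem_singleton] at hτ ⊢
  rcases hτ with rfl | rfl | rfl <;> simp

def vertexWeight (τ p : ℤ × ℤ) (L : ℤ) : ℤ :=
  τ.1 * p.1 + τ.2 * p.2 + (1 - τ.1 - τ.2) * (L - p.1 - p.2)

lemma vertexWeight_swap (τ p : ℤ × ℤ) (L : ℤ) :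
    vertexWeight τ.swap p.swap L = vertexWeight τ p L := by
  simp only [vertexWeight, Prod.fst_swap, Prod.snd_swap]; ring

lemma vertexWeight_of_mem {τ σ : ℤ × ℤ} (hτ : τ ∈ simplexVertices) (hσ : σ ∈ simplexVertices) :
    vertexWeight τ σ 1 = if σ = τ then 1 else 0 := by
  simp only [simplexVertices, mem_insert, mem_singleton] at hτ hσ
  rcases hτ with rfl | rfl | rfl <;> rcases hσ with rfl | rfl | rfl <;> simp [vertexWeight]

lemma vertexWeight_sum {ι : Type*} [Fintype ι] (τ : ℤ × ℤ) (n : ι → ℕ) (e : ι → ℤ × ℤ) :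
    vertexWeight τ (∑ r, n r • e r) (∑ r, n r) = ∑ r, n r * vertexWeight τ (e r) 1 := by
  simp only [vertexWeight, Prod.fst_sum, Prod.snd_sum, Prod.smul_fst, Prod.smul_snd]
  simp only [nsmul_eq_mul, mul_sum, ← sum_sub_distrib, ← sum_add_distrib]
  exact sum_congr rfl fun r _ => by ring

lemma natCast_sum_filter_eq_vertexWeight {ι : Type*} [Fintype ι] {e : ι → ℤ × ℤ}
    (he : ∀ r, e r ∈ simplexVertices) {τ : ℤ × ℤ} (hτ : τ ∈ simplexVertices) (n : ι → ℕ) :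
    ((∑ r with e r = τ, n r : ℕ) : ℤ) = vertexWeight τ (∑ r, n r • e r) (∑ r, n r) := by
  rw [vertexWeight_sum, Nat.cast_sum, sum_filter]
  refine sum_congr rfl fun r _ => ?_
  rw [vertexWeight_of_mem hτ (he r)]
  split_ifs <;> simp

lemma exists_ne_zero_eq_swap {ι : Type*} [Fintype ι] {e e' : ι → ℤ × ℤ}
    (he : ∀ r, e r ∈ simplexVertices) (he' : ∀ r, e' r ∈ simplexVertices) {n m : ι → ℕ}
    (hsum : ∑ r, n r = ∑ r, m r) (hbd : ∑ r, n r • e r = (∑ r, m r • e' r).swap)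
    {r₀ : ι} (hr₀ : n r₀ ≠ 0) : ∃ r, m r ≠ 0 ∧ e' r = (e r₀).swap := by
  have hsum' : ∑ r, (n r : ℤ) = ∑ r, (m r : ℤ) := by exact_mod_cast hsum
  have hcount : ∑ r with e' r = (e r₀).swap, m r = ∑ r with e r = e r₀, n r := by
    apply Nat.cast_injective (R := ℤ)
    rw [natCast_sum_filter_eq_vertexWeight he' (swap_mem_simplexVertices (he r₀)),
      natCast_sum_filter_eq_vertexWeight he (he r₀), hbd, hsum', ← vertexWeight_swap,
      Prod.swap_swap]
  have hle : n r₀ ≤ ∑ r with e r = e r₀, n r :=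
    single_le_sum (fun _ _ => Nat.zero_le _) (by simp)
  obtain ⟨r, hr, hmr⟩ :=
    exists_ne_zero_of_sum_ne_zero (by omega : ∑ r with e' r = (e r₀).swap, m r ≠ 0)
  exact ⟨r, hmr, (mem_filter.1 hr).2⟩

section TreeLabeling

variable {V ι α : Type*}

def pairGraph (P : Finset (Sym2 (V × ι))) : SimpleGraph V :=
  SimpleGraph.fromRel fun v w => ∃ i j, s((v, i), (w, j)) ∈ P

def innerPairs [DecidableEq V] (P : Finset (Sym2 (V × ι))) (A : Finset V) :
    Finset (Sym2 (V × ι)) :=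
  P.filter fun p => p.map Prod.fst ∈ A.sym2

variable {P : Finset (Sym2 (V × ι))} {A : Finset V}

lemma exists_mk_mem_of_ne_univ [Fintype V] (hP : (pairGraph P).Connected) (hA : A.Nonempty)
    (hAu : A ≠ univ) : ∃ v ∈ A, ∃ w ∉ A, ∃ i j, s((v, i), (w, j)) ∈ P := by
  obtain ⟨a, ha⟩ := hA
  obtain ⟨b, hb⟩ : ∃ b, b ∉ A := by simpa [eq_univ_iff_forall] using hAu
  obtain ⟨W⟩ := hP.preconnected a b
  obtain ⟨d, -, hd₁, hd₂⟩ := W.exists_boundary_dart (A : Set V) ha hb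
  obtain ⟨-, ⟨i, j, h⟩ | ⟨i, j, h⟩⟩ := (SimpleGraph.fromRel_adj _ _ _).1 d.adj
  · exact ⟨_, hd₁, _, hd₂, i, j, h⟩
  · exact ⟨_, hd₁, _, hd₂, j, i, by rwa [Sym2.eq_swap]⟩

variable [DecidableEq V]

lemma mk_mem_innerPairs {v w : V} {i j : ι} :
    s((v, i), (w, j)) ∈ innerPairs P A ↔ s((v, i), (w, j)) ∈ P ∧ v ∈ A ∧ w ∈ A := by
  simp [innerPairs]

lemma innerPairs_mono {B : Finset V} (h : A ⊆ B) : innerPairs P A ⊆ innerPairs P B :=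
  monotone_filter_right _ fun _ _ => (sym2_mono h ·)

variable [Fintype V]

lemma innerPairs_univ : innerPairs P univ = P := by
  simp [innerPairs]

lemma card_innerPairs_add_le (hP : (pairGraph P).Connected) (hA : A.Nonempty) :
    #(innerPairs P A) + (Fintype.card V - #A) ≤ #P := by
  induction h : Fintype.card V - #A generalizing A with
  | zero => exact card_le_card (filter_subset _ P)
  | succ m ih =>
    obtain ⟨v, hv, w, hw, i, j, hvw⟩ :=
      exists_mk_mem_of_ne_univ hP hA (by rintro rfl; simp at h)
    have hlt : #(innerPairs P A) < #(innerPairs P (insert w A)) :=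
      card_lt_card <| (ssubset_iff_of_subset (innerPairs_mono (subset_insert _ _))).2
        ⟨_, mk_mem_innerPairs.2 ⟨hvw, mem_insert_of_mem hv, mem_insert_self _ _⟩,
          fun h => hw (mk_mem_innerPairs.1 h).2.2⟩
    have := ih (insert_nonempty w A) (by rw [card_insert_of_notMem hw]; omega)
    omega

lemma card_innerPairs_lt (hP : (pairGraph P).Connected) (hcard : #P = Fintype.card V - 1)
    (hA : A.Nonempty) : #(innerPairs P A) < #A := by
  have := card_innerPairs_add_le hP hA
  have := card_le_univ A
  have := hA.card_pos
  omega

variable (P) (ok : V → α → Prop) (compat : V × ι → α → V × ι → α → Prop)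

def IsCompatibleOn (A : Finset V) (c : V → α) : Prop :=
  (∀ v ∈ A, ok v (c v)) ∧
    ∀ v w i j, s((v, i), (w, j)) ∈ innerPairs P A → compat (v, i) (c v) (w, j) (c w)

variable {P ok compat}

lemma exists_isCompatibleOn_insert (hP : (pairGraph P).Connected)
    (hcard : #P = Fintype.card V - 1)
    (hsymm : ∀ h a h' b, compat h a h' b → compat h' b h a)
    (hext : ∀ v w i j, s((v, i), (w, j)) ∈ P → ∀ a, ok v a → ∃ b, ok w b ∧ compat (v, i) a (w, j) b)
    (hA : A.Nonempty) (hAu : A ≠ univ) (hAc : #(innerPairs P A) + 1 = #A) {c : V → α}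
    (hc : IsCompatibleOn P ok compat A c) :
    ∃ w ∉ A, #(innerPairs P (insert w A)) + 1 = #(insert w A) ∧
      ∃ c', IsCompatibleOn P ok compat (insert w A) c' := by
  classical
  obtain ⟨v, hv, w, hw, i, j, hvw⟩ := exists_mk_mem_of_ne_univ hP hA hAu
  obtain ⟨b, hb, hcb⟩ := hext v w i j hvw (c v) (hc.1 v hv)
  have hnew : s((v, i), (w, j)) ∉ innerPairs P A := fun h => hw (mk_mem_innerPairs.1 h).2.2
  -- Since `P` spans a tree, the new pair is the only one between `w` and `A`.
  have hinner : insert s((v, i), (w, j)) (innerPairs P A) = innerPairs P (insert w A) := by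
    refine eq_of_subset_of_card_le (insert_subset
      (mk_mem_innerPairs.2 ⟨hvw, mem_insert_of_mem hv, mem_insert_self _ _⟩)
      (innerPairs_mono (subset_insert _ _))) ?_
    have := card_innerPairs_lt hP hcard (insert_nonempty w A)
    rw [card_insert_of_notMem hw] at this
    rw [card_insert_of_notMem hnew]
    omega
  have hcA : ∀ u ∈ A, Function.update c w b u = c u := fun u hu =>
    Function.update_of_ne (ne_of_mem_of_not_mem hu hw) _ _
  refine ⟨w, hw, ?_, Function.update c w b, ?_, ?_⟩
  · rw [← hinner, card_insert_of_notMem hnew, card_insert_of_notMem hw, hAc]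
  · intro u hu
    rcases mem_insert.1 hu with rfl | hu
    · simpa using hb
    · rw [hcA u hu]
      exact hc.1 u hu
  · intro x y k l hp
    rw [← hinner, mem_insert] at hp
    rcases hp with hp | hp
    · rcases Sym2.eq_iff.1 hp with ⟨h₁, h₂⟩ | ⟨h₁, h₂⟩ <;>
        simp only [Prod.mk.injEq] at h₁ h₂ <;> obtain ⟨rfl, rfl⟩ := h₁ <;> obtain ⟨rfl, rfl⟩ := h₂
      · simpa [hcA x hv] using hcb
      · simpa [hcA y hv] using hsymm _ _ _ _ hcb
    · obtain ⟨-, hx, hy⟩ := mk_mem_innerPairs.1 hp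
      rw [hcA x hx, hcA y hy]
      exact hc.2 x y k l hp

theorem exists_compatible_labeling (hP : (pairGraph P).Connected)
    (hcard : #P = Fintype.card V - 1)
    (hsymm : ∀ h a h' b, compat h a h' b → compat h' b h a)
    (hext : ∀ v w i j, s((v, i), (w, j)) ∈ P → ∀ a, ok v a → ∃ b, ok w b ∧ compat (v, i) a (w, j) b)
    {v₀ : V} {a₀ : α} (h₀ : ok v₀ a₀) :
    ∃ c : V → α, (∀ v, ok v (c v)) ∧
      ∀ v w i j, s((v, i), (w, j)) ∈ P → compat (v, i) (c v) (w, j) (c w) := by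
  suffices H : ∀ n (A : Finset V) (c : V → α), Fintype.card V - #A = n → A.Nonempty →
      #(innerPairs P A) + 1 = #A → IsCompatibleOn P ok compat A c →
      ∃ c, IsCompatibleOn P ok compat univ c by
    have h₁ : innerPairs P {v₀} = ∅ := by
      simpa using card_innerPairs_lt hP hcard (singleton_nonempty v₀)
    obtain ⟨c, hok, hc⟩ := H _ {v₀} (fun _ => a₀) rfl (singleton_nonempty v₀) (by simp [h₁])
      ⟨by simpa using h₀, by simp [h₁]⟩
    exact ⟨c, fun v => hok v (mem_univ v), fun v w i j h => hc v w i j (by rwa [innerPairs_univ])⟩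
  intro n
  induction n with
  | zero =>
    intro A c h _ _ hc
    obtain rfl : A = univ := eq_univ_of_card A (by have := card_le_univ A; omega)
    exact ⟨c, hc⟩
  | succ n ih =>
    intro A c h hA hAc hc
    obtain ⟨w, hw, hwc, c', hc'⟩ :=
      exists_isCompatibleOn_insert hP hcard hsymm hext hA (by rintro rfl; simp at h) hAc hc
    exact ih _ c' (by rw [card_insert_of_notMem hw]; omega) (insert_nonempty w A) hwc hc'

end TreeLabeling

lemma cbGens_level (r : Fin 9) : cbGens r 9 = 1 := by
  fin_cases r <;> rfl

lemma natComb_level (n : Fin 9 → ℕ) : (∑ r, n r • cbGens r) 9 = ((∑ r, n r : ℕ) : ℤ) := by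
  simp [Finset.sum_apply, cbGens_level]

lemma natComb_mem_coneC (n : Fin 9 → ℕ) :
    (fun t => ((∑ r, n r • cbGens r) t : ℝ)) ∈ coneC :=
  ⟨fun r => n r, fun r => Nat.cast_nonneg _, by ext t; simp [cbGensR, Finset.sum_apply]⟩

lemma exists_natComb_of_mem_coneC {x : Fin 10 → ℤ} (hx : (fun t => (x t : ℝ)) ∈ coneC) :
    ∃ n : Fin 9 → ℕ, x = ∑ r, n r • cbGens r := by
  obtain ⟨c, hc, hxc⟩ := hx
  have hx' (t : Fin 10) : (x t : ℝ) = ∑ r, c r * cbGensR r t := by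
    simpa [Finset.sum_apply] using congrFun hxc t
  have h0 := hx' 0; have h1 := hx' 1; have h2 := hx' 2; have h3 := hx' 3; have h4 := hx' 4
  have h5 := hx' 5; have h6 := hx' 6; have h7 := hx' 7; have h8 := hx' 8; have h9 := hx' 9
  simp [Fin.sum_univ_succ, cbGensR, cbGens] at h0 h1 h2 h3 h4 h5 h6 h7 h8 h9
  have e₁ : x 3 + x 4 = x 6 + x 7 := by exact_mod_cast (by linarith : (x 3 + x 4 : ℝ) = x 6 + x 7)
  have e₂ : x 3 + x 8 = x 5 + x 6 := by exact_mod_cast (by linarith : (x 3 + x 8 : ℝ) = x 5 + x 6)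
  -- Shifting `c` along the relation `g_X + g_S + g_T = g₁₂ + g₂₃ + g₃₁` by the fractional
  -- part of `c 1` makes every coefficient an integer greater than `-1`.
  set s := ⌊c 1⌋
  have hs₁ : (s : ℝ) ≤ c 1 := Int.floor_le _
  have hs₂ : c 1 < s + 1 := Int.lt_floor_add_one _
  let m : Fin 9 → ℤ := ![x 9 - x 0 - x 1 - x 2 - x 5 - x 6 - x 7 + s, s, x 6 - x 3 + s,
    x 3 - s, x 5 - s, x 7 - s, x 1, x 2, x 0]
  have hm (r : Fin 9) : 0 ≤ m r := by
    suffices (-1 : ℝ) < m r by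
      have : (-1 : ℤ) < m r := by exact_mod_cast this
      omega
    fin_cases r <;> simp [m] <;> linarith [hc 0, hc 1, hc 2, hc 3, hc 4, hc 5, hc 6, hc 7, hc 8]
  refine ⟨fun r => (m r).toNat, ?_⟩
  have hm' := fun r => Int.toNat_of_nonneg (hm r)
  ext t
  fin_cases t <;> simp [Fin.sum_univ_succ, cbGens, hm', m] <;> omega

lemma cbGens_mem_coneC (r : Fin 9) : (fun t => (cbGens r t : ℝ)) ∈ coneC := by
  have h : ∑ r', (Pi.single r 1 : Fin 9 → ℕ) r' • cbGens r' = cbGens r := by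
    simp [Pi.single_apply]
  rw [← h]
  exact natComb_mem_coneC _

lemma bd10_cbGens_mem (i : Fin 3) (r : Fin 9) : bd10 (cbGens r) i ∈ simplexVertices := by
  revert i r; decide

def bd10Hom (i : Fin 3) : (Fin 10 → ℤ) →+ ℤ × ℤ where
  toFun x := bd10 x i
  map_zero' := by fin_cases i <;> rfl
  map_add' x y := by fin_cases i <;> simp [bd10] <;> constructor <;> ring

lemma bd10Hom_apply (i : Fin 3) (x : Fin 10 → ℤ) : bd10Hom i x = bd10 x i := rfl

lemma bd10_natComb (n : Fin 9 → ℕ) (i : Fin 3) :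
    bd10 (∑ r, n r • cbGens r) i = ∑ r, n r • bd10 (cbGens r) i := by
  simp only [← bd10Hom_apply, map_sum, map_nsmul]

lemma exists_matching_cbGens {n m : Fin 9 → ℕ} {i j : Fin 3} (hsum : ∑ r, n r = ∑ r, m r)
    (hbd : bd10 (∑ r, n r • cbGens r) i = sw (bd10 (∑ r, m r • cbGens r) j)) {r₀ : Fin 9}
    (hr₀ : n r₀ ≠ 0) : ∃ r, m r ≠ 0 ∧ bd10 (cbGens r₀) i = sw (bd10 (cbGens r) j) := by
  rw [bd10_natComb, bd10_natComb] at hbd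
  obtain ⟨r, hr, hswap⟩ :=
    exists_ne_zero_eq_swap (bd10_cbGens_mem i) (bd10_cbGens_mem j) hsum hbd hr₀
  exact ⟨r, hr, by rw [hswap]; rfl⟩

section FiberProduct

variable {V : Type*}

def MemFiberProduct (P : Finset (Sym2 (V × Fin 3))) (k : ℤ) (f : V → Fin 10 → ℤ) : Prop :=
  (∀ v, (fun t => (f v t : ℝ)) ∈ coneC) ∧
    (∀ v w i j, s((v, i), (w, j)) ∈ P → bd10 (f v) i = sw (bd10 (f w) j)) ∧
    ∀ v, f v 9 = k

variable {P : Finset (Sym2 (V × Fin 3))}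

lemma MemFiberProduct.eq_zero {f : V → Fin 10 → ℤ} (hf : MemFiberProduct P 0 f) : f = 0 := by
  funext v
  obtain ⟨n, hn⟩ := exists_natComb_of_mem_coneC (hf.1 v)
  have hlevel := hf.2.2 v
  rw [hn, natComb_level, Nat.cast_eq_zero, sum_eq_zero_iff] at hlevel
  simp [hn, hlevel]

lemma exists_levelOne_sub [Fintype V] (hP : (pairGraph P).Connected)
    (hcard : #P = Fintype.card V - 1) {k : ℕ} {f : V → Fin 10 → ℤ}
    (hf : MemFiberProduct P ↑(k + 1) f) :
    ∃ g, MemFiberProduct P 1 g ∧ MemFiberProduct P k (f - g) := by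
  classical
  obtain ⟨hcone, hmatch, hlevel⟩ := hf
  choose N hN using fun v => exists_natComb_of_mem_coneC (hcone v)
  have hsum (v : V) : ∑ r, N v r = k + 1 := by
    have := hlevel v
    rw [hN v, natComb_level] at this
    exact_mod_cast this
  obtain ⟨v₀⟩ := hP.nonempty
  obtain ⟨r₀, -, hr₀⟩ := exists_ne_zero_of_sum_ne_zero (by simp [hsum v₀] : ∑ r, N v₀ r ≠ 0)
  obtain ⟨c, hc, hcompat⟩ := exists_compatible_labeling (ok := fun v r => N v r ≠ 0)
    (compat := fun h r h' r' => bd10 (cbGens r) h.2 = sw (bd10 (cbGens r') h'.2)) hP hcard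
    (fun _ _ _ _ h => by rw [h]; rfl)
    (fun v w i j hvw _ hr => exists_matching_cbGens ((hsum v).trans (hsum w).symm)
      (by rw [← hN v, ← hN w]; exact hmatch v w i j hvw) hr)
    hr₀
  refine ⟨fun v => cbGens (c v), ⟨fun v => cbGens_mem_coneC _, hcompat, fun v => cbGens_level _⟩,
    fun v => ?_, fun v w i j hvw => ?_, fun v => ?_⟩
  · rw [Pi.sub_apply, hN v, sum_nsmul_sub_of_ne_zero cbGens (hc v)]
    exact natComb_mem_coneC _
  · simp only [Pi.sub_apply, ← bd10Hom_apply, map_sub]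
    simp only [bd10Hom_apply, hmatch v w i j hvw, hcompat v w i j hvw]
    rfl
  · simp [hlevel v, cbGens_level]

lemma exists_sum_levelOne [Fintype V] (hP : (pairGraph P).Connected)
    (hcard : #P = Fintype.card V - 1) :
    ∀ (k : ℕ) (f : V → Fin 10 → ℤ), MemFiberProduct P k f →
      ∃ g : Fin k → V → Fin 10 → ℤ, (∀ s, MemFiberProduct P 1 (g s)) ∧ f = ∑ s, g s
  | 0, f, hf => ⟨finZeroElim, finZeroElim, by simpa using hf.eq_zero⟩
  | k + 1, f, hf => by
    obtain ⟨g, hg, hfg⟩ := exists_levelOne_sub hP hcard hf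
    obtain ⟨g', hg', hsum⟩ := exists_sum_levelOne hP hcard k _ hfg
    exact ⟨Fin.cons g g', Fin.cases hg hg', by rw [Fin.sum_cons, ← hsum, add_sub_cancel]⟩

end FiberProduct

theorem stmt_13_general (V : Type) [Fintype V]
    (P : Finset (Sym2 (V × Fin 3)))
    (hconn : (SimpleGraph.fromRel
      (fun v w => ∃ i j : Fin 3, s((v, i), (w, j)) ∈ P)).Connected)
    (hcard : P.card = Fintype.card V - 1)
    (f : V → Fin 10 → ℤ)
    (hf1 : ∀ v, (fun t => (f v t : ℝ)) ∈ coneC)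
    (hf2 : ∀ v w, f v 9 = f w 9)
    (hf3 : ∀ (v w : V) (i j : Fin 3),
      s((v, i), (w, j)) ∈ P → bd10 (f v) i = sw (bd10 (f w) j)) :
    ∃ (k : ℕ) (g : Fin k → V → Fin 10 → ℤ),
      (∀ s : Fin k,
        (∀ v, (fun t => (g s v t : ℝ)) ∈ coneC) ∧
        (∀ v w, g s v 9 = g s w 9) ∧
        (∀ (v w : V) (i j : Fin 3),
          s((v, i), (w, j)) ∈ P → bd10 (g s v) i = sw (bd10 (g s w) j)) ∧
        (∀ v, g s v 9 = 1)) ∧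
      f = ∑ s : Fin k, g s ∧ (∀ v, (k : ℤ) = f v 9) := by
  obtain ⟨v₀⟩ := hconn.nonempty
  obtain ⟨n, hn⟩ := exists_natComb_of_mem_coneC (hf1 v₀)
  have hk (v : V) : f v 9 = ↑(∑ r, n r) := by rw [hf2 v v₀, hn, natComb_level]
  obtain ⟨g, hg, hfg⟩ := exists_sum_levelOne hconn hcard _ f ⟨hf1, hf3, hk⟩
  refine ⟨_, g, fun s => ⟨(hg s).1, fun v w => ?_, (hg s).2.1, (hg s).2.2⟩, hfg,
    fun v => (hk v).symm⟩
  rw [(hg s).2.2 v, (hg s).2.2 w]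

/-- Tree gluing: let `V` be a nonempty finite set and `P` a set of unordered pairs of
distinct half-edges (each half-edge in at most one pair, no pair joining a vertex to
itself) whose associated graph on `V` is a tree (connected with `|P| = |V| − 1`).
Every element `f` of the fiber-product monoid `M` (functions `V → ℤ¹⁰` landing in
`C ∩ ℤ¹⁰`, with all levels equal, matching dually along the pairs of `P`) is a sum of
`L(f)` elements of `M` of common level `1`. -/
theorem stmt_13 (V : Type) [Fintype V] [Nonempty V]
    (P : Finset (Sym2 (V × Fin 3)))
    (hndiag : ∀ p ∈ P, ¬ p.IsDiag)
    (hnoloop : ∀ (v w : V) (i j : Fin 3), s((v, i), (w, j)) ∈ P → v ≠ w)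
    (hdisj : ∀ p ∈ P, ∀ q ∈ P, ∀ h : V × Fin 3, h ∈ p → h ∈ q → p = q)
    (hconn : (SimpleGraph.fromRel
      (fun v w => ∃ i j : Fin 3, s((v, i), (w, j)) ∈ P)).Connected)
    (hcard : P.card = Fintype.card V - 1)
    (f : V → Fin 10 → ℤ)
    (hf1 : ∀ v, (fun t => (f v t : ℝ)) ∈ coneC)
    (hf2 : ∀ v w, f v 9 = f w 9)
    (hf3 : ∀ (v w : V) (i j : Fin 3),
      s((v, i), (w, j)) ∈ P → bd10 (f v) i = sw (bd10 (f w) j)) :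
    ∃ (k : ℕ) (g : Fin k → V → Fin 10 → ℤ),
      (∀ s : Fin k,
        (∀ v, (fun t => (g s v t : ℝ)) ∈ coneC) ∧
        (∀ v w, g s v 9 = g s w 9) ∧
        (∀ (v w : V) (i j : Fin 3),
          s((v, i), (w, j)) ∈ P → bd10 (g s v) i = sw (bd10 (g s w) j)) ∧
        (∀ v, g s v 9 = 1)) ∧
      f = ∑ s : Fin k, g s ∧ (∀ v, (k : ℤ) = f v 9) :=
  stmt_13_general V P hconn hcard f hf1 hf2 hf3
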